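/- arXiv:2403.06619 — 4 statements merged into one kernel-verified Lean document; each statement's English description precedes it below -/
import Mathlib

section
/- Let γ ∈ k be a root of x³ + a·x + b (so W = (γ, 0) is a k-rational point of order 2 on E, and the Miller function of W is h_W(x,y) = x − γ). If P and Q = (x_Q, y_Q) are affine points of E(k) with 2•P = Q, then x_Q − γ is a square in k. -/
/-- The elliptic curve `y² = x³ + a·x + b` in short Weierstrass form. -/
def shortWCurve {k : Type*} [Field k] (a b : k) : WeierstrassCurve.Affine k :=
  { a₁ := 0, a₂ := 0, a₃ := 0, a₄ := a, a₆ := b }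

/-!
If `2P` is affine for `P = (x, y)`, then `y ≠ -y` and `x(2P) = λ² - 2x` with tangent slope
`λ = (3x² + a) / (2y)`. For a root `γ` of `f = X³ + aX + b`, clearing denominators and using
`y² = f(x)` turns `x(2P) - γ` into the square of `((x - γ)² - f'(γ)) / (2y)`.
-/

open WeierstrassCurve.Affine

section ShortWeierstrass

variable {k : Type*} [Field k] {a b : k}

lemma shortWCurve_equation_iff {x y : k} :
    (shortWCurve a b).Equation x y ↔ y ^ 2 = x ^ 3 + a * x + b := by
  rw [equation_iff]
  simp only [shortWCurve]
  ring_nf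

lemma shortWCurve_negY (x y : k) : (shortWCurve a b).negY x y = -y := by
  simp [negY, shortWCurve]

lemma shortWCurve_Y_ne_negY_of_two_smul_eq_some [DecidableEq k] {xP yP xQ yQ : k}
    {hP : (shortWCurve a b).Nonsingular xP yP} {hQ : (shortWCurve a b).Nonsingular xQ yQ}
    (hPQ : 2 • Point.some _ _ hP = Point.some _ _ hQ) : yP ≠ (shortWCurve a b).negY xP yP := by
  intro hY
  rw [two_smul, Point.add_self_of_Y_eq hY] at hPQ
  exact Point.some_ne_zero _ hPQ.symm

lemma shortWCurve_two_mul_Y_ne_zero_of_two_smul_eq_some [DecidableEq k] {xP yP xQ yQ : k}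
    {hP : (shortWCurve a b).Nonsingular xP yP} {hQ : (shortWCurve a b).Nonsingular xQ yQ}
    (hPQ : 2 • Point.some _ _ hP = Point.some _ _ hQ) : 2 * yP ≠ 0 := by
  have hY := shortWCurve_Y_ne_negY_of_two_smul_eq_some hPQ
  rw [shortWCurve_negY, ← sub_ne_zero] at hY
  rwa [two_mul, ← sub_neg_eq_add]

lemma shortWCurve_X_of_two_smul_eq_some [DecidableEq k] {xP yP xQ yQ : k}
    {hP : (shortWCurve a b).Nonsingular xP yP} {hQ : (shortWCurve a b).Nonsingular xQ yQ}
    (hPQ : 2 • Point.some _ _ hP = Point.some _ _ hQ) :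
    xQ = ((3 * xP ^ 2 + a) / (2 * yP)) ^ 2 - 2 * xP := by
  have hY := shortWCurve_Y_ne_negY_of_two_smul_eq_some hPQ
  rw [two_smul, Point.add_self_of_Y_ne hY, Point.some.injEq] at hPQ
  rw [← hPQ.1, slope_of_Y_ne rfl hY, shortWCurve_negY]
  simp only [addX, shortWCurve]
  ring

lemma tangent_slope_sq_sub_two_mul_sub_root_eq_sq {x y γ : k} (h2y : 2 * y ≠ 0)
    (hxy : y ^ 2 = x ^ 3 + a * x + b) (hγ : γ ^ 3 + a * γ + b = 0) :
    ((3 * x ^ 2 + a) / (2 * y)) ^ 2 - 2 * x - γ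
      = (((x - γ) ^ 2 - (3 * γ ^ 2 + a)) / (2 * y)) ^ 2 := by
  have h2 : (2 : k) ≠ 0 := left_ne_zero_of_mul h2y
  have hy : y ≠ 0 := right_ne_zero_of_mul h2y
  field_simp
  linear_combination (-4 * (2 * x + γ)) * hxy - (4 * (2 * x + γ)) * hγ

end ShortWeierstrass

open Classical in
theorem stmt_6_general {k : Type*} [Field k]
    (a b : k)
    (γ : k) (hγ : γ ^ 3 + a * γ + b = 0)
    (xP yP xQ yQ : k)
    (hP : (shortWCurve a b).Nonsingular xP yP)
    (hQ : (shortWCurve a b).Nonsingular xQ yQ)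
    (hPQ : 2 • (WeierstrassCurve.Affine.Point.some _ _ hP)
        = WeierstrassCurve.Affine.Point.some _ _ hQ) :
    ∃ ω : k, ω ^ 2 = xQ - γ := by
  refine ⟨((xP - γ) ^ 2 - (3 * γ ^ 2 + a)) / (2 * yP), ?_⟩
  rw [shortWCurve_X_of_two_smul_eq_some hPQ]
  exact (tangent_slope_sq_sub_two_mul_sub_root_eq_sq
    (shortWCurve_two_mul_Y_ne_zero_of_two_smul_eq_some hPQ)
    (shortWCurve_equation_iff.mp hP.1) hγ).symm

open Classical in
theorem stmt_6 {k : Type*} [Field k] (h2 : (2 : k) ≠ 0) (h3 : (3 : k) ≠ 0)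
    (a b : k) (hΔ : -16 * (4 * a ^ 3 + 27 * b ^ 2) ≠ 0)
    (γ : k) (hγ : γ ^ 3 + a * γ + b = 0)
    (xP yP xQ yQ : k)
    (hP : (shortWCurve a b).Nonsingular xP yP)
    (hQ : (shortWCurve a b).Nonsingular xQ yQ)
    (hPQ : 2 • (WeierstrassCurve.Affine.Point.some _ _ hP)
        = WeierstrassCurve.Affine.Point.some _ _ hQ) :
    ∃ ω : k, ω ^ 2 = xQ - γ :=
  stmt_6_general a b γ hγ xP yP xQ yQ hP hQ hPQ
end

section
/- Suppose the full 2-torsion of E is k-rational, i.e. x³ + a·x + b = (x − γ₁)(x − γ₂)(x − γ₃) with γ₁, γ₂, γ₃ ∈ k. Let Q = (x_Q, y_Q) ∈ E(k) be an affine point with y_Q ≠ 0 (i.e. Q is not a 2-torsion point). Then there exists P ∈ E(k) with 2•P = Q if and only if both x_Q − γ₁ and x_Q − γ₂ are squares in k. -/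
/-!
On `y² = (x - e₁)(x - e₂)(x - e₃)` the tangent construction gives, for `P = (x, y)` with `y ≠ 0`,
`x(2P) - e₁ = (((x - e₁)² - (e₁ - e₂)(e₁ - e₃)) / 2y)²`, so the abscissa of a double differs from
every root by a square. Conversely, if `x₀ - e₁ = u²` and `x₀ - e₂ = v²`, then `y₀² = ∏ (x₀ - eᵢ)`
and `y₀ ≠ 0` give `w` with `x₀ - e₃ = w²` and `y₀ = uvw`; the point
`(x₀ + uv + vw + wu, (u + v)(v + w)(w + u))` has tangent slope `u + v + w` and doubles to `(x₀, y₀)`.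
-/

open Polynomial

theorem shortWCurve_isElliptic {k : Type*} [Field k] (a b : k)
    (hΔ : -16 * (4 * a ^ 3 + 27 * b ^ 2) ≠ 0) :
    WeierstrassCurve.IsElliptic (shortWCurve a b) := by
  refine ⟨isUnit_iff_ne_zero.mpr ?_⟩
  convert hΔ using 1
  simp only [WeierstrassCurve.Δ, WeierstrassCurve.b₂, WeierstrassCurve.b₄,
    WeierstrassCurve.b₆, WeierstrassCurve.b₈, shortWCurve]
  ring

namespace WeierstrassCurve.Affine

variable {k : Type*} [Field k]

/-- The curve `y² = (x - e₁)(x - e₂)(x - e₃)`. -/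
def ofRoots (e₁ e₂ e₃ : k) : Affine k :=
  { a₁ := 0, a₂ := -(e₁ + e₂ + e₃), a₃ := 0, a₄ := e₁ * e₂ + e₁ * e₃ + e₂ * e₃,
    a₆ := -(e₁ * e₂ * e₃) }

lemma ofRoots_comm (e₁ e₂ e₃ : k) : ofRoots e₁ e₂ e₃ = ofRoots e₂ e₁ e₃ := by
  ext <;> simp only [ofRoots] <;> ring

lemma equation_ofRoots {e₁ e₂ e₃ x y : k} :
    (ofRoots e₁ e₂ e₃).Equation x y ↔ y ^ 2 = (x - e₁) * (x - e₂) * (x - e₃) := by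
  rw [equation_iff]
  simp only [ofRoots]
  constructor <;> intro h <;> linear_combination h

lemma negY_ofRoots (e₁ e₂ e₃ x y : k) : (ofRoots e₁ e₂ e₃).negY x y = -y := by
  simp [ofRoots, negY]

lemma Δ_ofRoots (e₁ e₂ e₃ : k) :
    (ofRoots e₁ e₂ e₃).Δ = 16 * ((e₁ - e₂) * (e₁ - e₃) * (e₂ - e₃)) ^ 2 := by
  simp only [ofRoots, Δ, b₂, b₄, b₆, b₈]
  ring

lemma slope_ofRoots [DecidableEq k] {e₁ e₂ e₃ x y : k} (hy : y ≠ -y) :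
    (ofRoots e₁ e₂ e₃).slope x x y y =
      ((x - e₁) * (x - e₂) + (x - e₁) * (x - e₃) + (x - e₂) * (x - e₃)) / (2 * y) := by
  rw [slope_of_Y_ne rfl (by rwa [negY_ofRoots]), negY_ofRoots]
  simp only [ofRoots]
  ring_nf

lemma addX_slope_sub_ofRoots [DecidableEq k] {e₁ e₂ e₃ x y : k}
    (h : (ofRoots e₁ e₂ e₃).Equation x y) (hy : y ≠ -y) :
    (ofRoots e₁ e₂ e₃).addX x x ((ofRoots e₁ e₂ e₃).slope x x y y) - e₁ =
      (((x - e₁) ^ 2 - (e₁ - e₂) * (e₁ - e₃)) / (2 * y)) ^ 2 := by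
  have h2y : 2 * y ≠ 0 := fun h2y => hy (by linear_combination h2y)
  have h2 : (2 : k) ≠ 0 := left_ne_zero_of_mul h2y
  have hy0 : y ≠ 0 := right_ne_zero_of_mul h2y
  rw [slope_ofRoots hy]
  simp only [addX, ofRoots]
  field_simp
  linear_combination 4 * (e₂ + e₃ - 2 * x) * equation_ofRoots.mp h


theorem isSquare_sub_of_two_nsmul_eq_some [DecidableEq k] {W : Affine k} [W.IsElliptic]
    {e₁ e₂ e₃ : k} (hW : W = ofRoots e₁ e₂ e₃) {P : W.Point} {x₀ y₀ : k}
    {h₀ : W.Nonsingular x₀ y₀} (hP : 2 • P = .some x₀ y₀ h₀) : IsSquare (x₀ - e₁) := by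
  subst hW
  rcases P with _ | ⟨x, y, h⟩
  · exact absurd hP.symm (Point.some_ne_zero h₀)
  rw [two_nsmul] at hP
  by_cases hy : y = (ofRoots e₁ e₂ e₃).negY x y
  · exact absurd (Point.add_self_of_Y_eq hy ▸ hP).symm (Point.some_ne_zero h₀)
  rw [Point.add_self_of_Y_ne hy, Point.some.injEq] at hP
  rw [negY_ofRoots] at hy
  rw [← hP.1, addX_slope_sub_ofRoots h.1 hy]
  exact IsSquare.sq _

theorem exists_two_nsmul_eq_some_of_sub_eq_sq [DecidableEq k] {W : Affine k} [W.IsElliptic]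
    {x₀ u v w : k} (hW : W = ofRoots (x₀ - u ^ 2) (x₀ - v ^ 2) (x₀ - w ^ 2))
    (h₀ : W.Nonsingular x₀ (u * v * w)) : ∃ P, 2 • P = Point.some x₀ (u * v * w) h₀ := by
  set x := x₀ + (u * v + v * w + w * u)
  set y := (u + v) * (v + w) * (w + u)
  have h2y : 2 * y ≠ 0 := by
    intro h2y
    apply W.isUnit_Δ.ne_zero
    rw [hW, Δ_ofRoots]
    linear_combination 8 * (u + v) * (v + w) * (w + u) * ((v - u) * (w - u) * (w - v)) ^ 2 * h2y
  have hy : y ≠ -y := fun hy => h2y (by linear_combination hy)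
  have h : W.Nonsingular x y := equation_iff_nonsingular.mp (hW ▸ equation_ofRoots.mpr (by ring))
  have hslope : W.slope x x y y = u + v + w := by
    rw [hW, slope_ofRoots hy, div_eq_iff h2y]
    ring
  refine ⟨.some x y h, ?_⟩
  rw [two_nsmul, Point.add_self_of_Y_ne (by rwa [hW, negY_ofRoots]), Point.some.injEq, hslope]
  simp only [hW, addY, negAddY, negY_ofRoots]
  constructor <;> simp only [addX, ofRoots, x, y] <;> ring

theorem exists_two_nsmul_eq_some_iff [DecidableEq k] {W : Affine k} [W.IsElliptic]
    {e₁ e₂ e₃ : k} (hW : W = ofRoots e₁ e₂ e₃) {x₀ y₀ : k} (h₀ : W.Nonsingular x₀ y₀)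
    (hy₀ : y₀ ≠ 0) :
    (∃ P : W.Point, 2 • P = .some x₀ y₀ h₀) ↔ IsSquare (x₀ - e₁) ∧ IsSquare (x₀ - e₂) := by
  refine ⟨fun ⟨P, hP⟩ => ⟨isSquare_sub_of_two_nsmul_eq_some hW hP,
    isSquare_sub_of_two_nsmul_eq_some (hW.trans (ofRoots_comm ..)) hP⟩, ?_⟩
  rintro ⟨⟨u, hu⟩, ⟨v, hv⟩⟩
  have heq := equation_ofRoots.mp (hW ▸ h₀.1)
  have huv : u * v ≠ 0 := by
    intro huv
    apply hy₀
    rw [← pow_eq_zero_iff two_ne_zero, heq, hu, hv]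
    linear_combination (x₀ - e₃) * u * v * huv
  obtain ⟨w, hw, rfl⟩ : ∃ w, x₀ - e₃ = w ^ 2 ∧ y₀ = u * v * w := by
    refine ⟨y₀ / (u * v), ?_, by rw [mul_div_cancel₀ _ huv]⟩
    rw [div_pow, eq_div_iff (pow_ne_zero 2 huv)]
    linear_combination -heq - (x₀ - e₃) * ((x₀ - e₂) * hu + u * u * hv)
  obtain rfl : e₁ = x₀ - u ^ 2 := by linear_combination -hu
  obtain rfl : e₂ = x₀ - v ^ 2 := by linear_combination -hv
  obtain rfl : e₃ = x₀ - w ^ 2 := by linear_combination -hw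
  exact exists_two_nsmul_eq_some_of_sub_eq_sq hW h₀

lemma shortWCurve_eq_ofRoots {a b e₁ e₂ e₃ : k}
    (h : (X ^ 3 + C a * X + C b : k[X]) = (X - C e₁) * (X - C e₂) * (X - C e₃)) :
    shortWCurve a b = ofRoots e₁ e₂ e₃ := by
  rw [show (X - C e₁) * (X - C e₂) * (X - C e₃) = X ^ 3 - C (e₁ + e₂ + e₃) * X ^ 2
      + C (e₁ * e₂ + e₁ * e₃ + e₂ * e₃) * X - C (e₁ * e₂ * e₃) by
    simp only [map_add, map_mul]; ring] at h
  have h₂ := congr_arg (coeff · 2) h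
  have h₁ := congr_arg (coeff · 1) h
  have h₀ := congr_arg (coeff · 0) h
  norm_num [coeff_X, coeff_C, coeff_X_pow, -map_add, -map_mul] at h₂ h₁ h₀
  ext <;> simp only [shortWCurve, ofRoots]
  · linear_combination h₂
  · exact h₁
  · exact h₀

end WeierstrassCurve.Affine

open WeierstrassCurve.Affine in
theorem stmt_7_general {k : Type*} [Field k]
    (a b : k) (hΔ : -16 * (4 * a ^ 3 + 27 * b ^ 2) ≠ 0)
    (γ₁ γ₂ γ₃ : k)
    (hfact : (X ^ 3 + C a * X + C b : k[X])
        = (X - C γ₁) * (X - C γ₂) * (X - C γ₃))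
    (xQ yQ : k) (hQ : (shortWCurve a b).Nonsingular xQ yQ) (hyQ : yQ ≠ 0) :
    (∃ P : (shortWCurve a b).Point,
        haveI := shortWCurve_isElliptic a b hΔ
        haveI := Classical.decEq k
        2 • P = WeierstrassCurve.Affine.Point.some xQ yQ hQ) ↔
      (∃ ω : k, ω ^ 2 = xQ - γ₁) ∧ (∃ ω : k, ω ^ 2 = xQ - γ₂) := by
  let := shortWCurve_isElliptic a b hΔ
  let := Classical.decEq k
  rw [exists_two_nsmul_eq_some_iff (shortWCurve_eq_ofRoots hfact) hQ hyQ]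
  simp only [isSquare_iff_exists_sq, eq_comm]

theorem stmt_7 {k : Type*} [Field k] (h2 : (2 : k) ≠ 0) (h3 : (3 : k) ≠ 0)
    (a b : k) (hΔ : -16 * (4 * a ^ 3 + 27 * b ^ 2) ≠ 0)
    (γ₁ γ₂ γ₃ : k)
    (hfact : (X ^ 3 + C a * X + C b : k[X])
        = (X - C γ₁) * (X - C γ₂) * (X - C γ₃))
    (xQ yQ : k) (hQ : (shortWCurve a b).Nonsingular xQ yQ) (hyQ : yQ ≠ 0) :
    (∃ P : (shortWCurve a b).Point,
        haveI := shortWCurve_isElliptic a b hΔ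
        haveI := Classical.decEq k
        2 • P = WeierstrassCurve.Affine.Point.some xQ yQ hQ) ↔
      (∃ ω : k, ω ^ 2 = xQ - γ₁) ∧ (∃ ω : k, ω ^ 2 = xQ - γ₂) :=
  stmt_7_general a b hΔ γ₁ γ₂ γ₃ hfact xQ yQ hQ hyQ
end

section
/- Let W = (γ, δ) ∈ E(k) be a point of order 3 (so δ ≠ 0), with tangent slope m = (3γ² + a)/(2δ) and Miller function h_W(x, y) = y − δ − m·(x − γ). If P and Q = (x_Q, y_Q) are affine points of E(k) with 3•P = Q, then h_W(−Q) = −y_Q − δ − m·(x_Q − γ) is a cube in k. -/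
def IsCube {M : Type*} [Monoid M] (a : M) : Prop := ∃ r, r ^ 3 = a

section IsCube

variable {M : Type*} [CommMonoid M]

lemma isCube_pow_three (r : M) : IsCube (r ^ 3) := ⟨r, rfl⟩

lemma IsCube.mul {a b : M} : IsCube a → IsCube b → IsCube (a * b)
  | ⟨r, hr⟩, ⟨s, hs⟩ => ⟨r * s, by rw [mul_pow, hr, hs]⟩

end IsCube

lemma IsCube.of_mul_right {K : Type*} [Field K] {a b : K} (hab : IsCube (a * b))
    (hb : IsCube b) (hb0 : b ≠ 0) : IsCube a := by
  obtain ⟨r, hr⟩ := hab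
  obtain ⟨s, hs⟩ := hb
  exact ⟨r / s, by rw [div_pow, hr, hs, mul_div_cancel_right₀ _ hb0]⟩

lemma mul_mul_eq_pow_three_of_cubic_eq {F : Type*} [Field F] {α c γ x₁ x₂ x₃ : F}
    (h : ∀ x, α * (x - γ) + c = 0 → (x - x₁) * (x - x₂) * (x - x₃) = (x - γ) ^ 3) :
    (α * (x₁ - γ) + c) * (α * (x₂ - γ) + c) * (α * (x₃ - γ) + c) = c ^ 3 := by
  rcases eq_or_ne α 0 with rfl | hα
  · ring
  · have h0 := h (γ - c / α) (by field_simp; ring)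
    field_simp at h0
    linear_combination -h0

lemma two_nsmul_eq_neg_of_three_nsmul_eq_zero {G : Type*} [AddGroup G] {g : G} (h : 3 • g = 0) :
    2 • g = -g :=
  eq_neg_of_add_eq_zero_left (by rwa [← succ_nsmul])

namespace WeierstrassCurve.Affine

open Polynomial

variable {F : Type*} [Field F] {W : WeierstrassCurve.Affine F}

lemma eval_addPolynomial (x₁ y₁ ℓ x y : F) :
    (W.addPolynomial x₁ y₁ ℓ).eval x =
      (y - (ℓ * (x - x₁) + y₁)) * (W.negY x y - (ℓ * (x - x₁) + y₁)) +
        W.polynomial.evalEval x y := by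
  simpa [evalEval_negPolynomial, linePolynomial, evalEval_C] using
    congrArg (evalEval x y) (W.C_addPolynomial x₁ y₁ ℓ)

lemma eval_addPolynomial_of_equation {x y : F} (h : W.Equation x y) (x₁ y₁ ℓ : F) :
    (W.addPolynomial x₁ y₁ ℓ).eval x =
      (y - (ℓ * (x - x₁) + y₁)) * (W.negY x y - (ℓ * (x - x₁) + y₁)) := by
  rw [eval_addPolynomial (y := y), (h : W.polynomial.evalEval x y = 0), add_zero]

lemma eval_addPolynomial_eq_evalEval (x₁ y₁ ℓ x : F) :
    (W.addPolynomial x₁ y₁ ℓ).eval x = W.polynomial.evalEval x (ℓ * (x - x₁) + y₁) := by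
  rw [eval_addPolynomial, sub_self, zero_mul, zero_add]

variable [DecidableEq F]

lemma Y_eq_slope_mul_add {x₁ x₂ y₁ y₂ : F} (h₁ : W.Equation x₁ y₁) (h₂ : W.Equation x₂ y₂)
    (hxy : ¬(x₁ = x₂ ∧ y₁ = W.negY x₂ y₂)) : y₂ = W.slope x₁ x₂ y₁ y₂ * (x₂ - x₁) + y₁ := by
  by_cases hx : x₁ = x₂
  · obtain rfl := Y_eq_of_Y_ne h₁ h₂ hx fun hy => hxy ⟨hx, hy⟩
    rw [hx, sub_self, mul_zero, zero_add]
  · rw [slope_of_X_ne hx]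
    field_simp [sub_ne_zero.mpr hx]
    ring

lemma Y_ne_negY_of_three_nsmul_eq_zero {γ δ : F} {hW : W.Nonsingular γ δ}
    (h : 3 • Point.some γ δ hW = 0) : δ ≠ W.negY γ δ := by
  intro hy
  have h2 : 2 • Point.some γ δ hW = 0 := by rw [two_nsmul]; exact Point.add_self_of_Y_eq hy
  apply Point.some_ne_zero hW
  rw [← h, show (3 : ℕ) = 2 + 1 from rfl, succ_nsmul, h2, zero_add]

lemma addX_slope_of_three_nsmul_eq_zero {γ δ : F} {hW : W.Nonsingular γ δ}
    (h : 3 • Point.some γ δ hW = 0) : W.addX γ γ (W.slope γ γ δ δ) = γ := by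
  have hy := Y_ne_negY_of_three_nsmul_eq_zero h
  have h2 := two_nsmul_eq_neg_of_three_nsmul_eq_zero h
  rw [two_nsmul, Point.add_self_of_Y_ne' hy, neg_inj] at h2
  injection h2

lemma addPolynomial_slope_of_three_nsmul_eq_zero {γ δ : F} {hW : W.Nonsingular γ δ}
    (h : 3 • Point.some γ δ hW = 0) : W.addPolynomial γ δ (W.slope γ γ δ δ) = -(X - C γ) ^ 3 := by
  rw [addPolynomial_slope hW.1 hW.1 fun hxy => Y_ne_negY_of_three_nsmul_eq_zero h hxy.2,
    addX_slope_of_three_nsmul_eq_zero h]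
  ring

-- `h_W(x, y) = y - δ - m (x - γ)`, `m` the tangent slope at `W = (γ, δ)`, normalised by `h_W(O) = 1`.
variable (W) in
def millerFn (γ δ : F) : W.Point → F
  | .zero => 1
  | .some x y _ => y - (W.slope γ γ δ δ * (x - γ) + δ)

variable {γ δ : F} {hW : W.Nonsingular γ δ}

@[simp]
lemma millerFn_zero : W.millerFn γ δ 0 = 1 := rfl

@[simp]
lemma millerFn_some {x y : F} (h : W.Nonsingular x y) :
    W.millerFn γ δ (Point.some x y h) = y - (W.slope γ γ δ δ * (x - γ) + δ) := rfl

lemma millerFn_some_mul_millerFn_neg_some (hT : 3 • Point.some γ δ hW = 0) {x y : F}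
    (h : W.Nonsingular x y) :
    W.millerFn γ δ (Point.some x y h) * W.millerFn γ δ (-Point.some x y h) = (γ - x) ^ 3 := by
  have hnorm := eval_addPolynomial_of_equation h.1 γ δ (W.slope γ γ δ δ)
  rw [addPolynomial_slope_of_three_nsmul_eq_zero hT] at hnorm
  simp only [eval_neg, eval_pow, eval_sub, eval_X, eval_C] at hnorm
  rw [Point.neg_some, millerFn_some, millerFn_some]
  linear_combination -hnorm

lemma millerFn_mul_millerFn_mul_millerFn_neg_add (hT : 3 • Point.some γ δ hW = 0) {x₁ x₂ y₁ y₂ : F}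
    (h₁ : W.Nonsingular x₁ y₁) (h₂ : W.Nonsingular x₂ y₂)
    (hxy : ¬(x₁ = x₂ ∧ y₁ = W.negY x₂ y₂)) :
    W.millerFn γ δ (Point.some x₁ y₁ h₁) * W.millerFn γ δ (Point.some x₂ y₂ h₂) *
        W.millerFn γ δ (-(Point.some x₁ y₁ h₁ + Point.some x₂ y₂ h₂)) =
      (W.slope x₁ x₂ y₁ y₂ * (γ - x₁) + y₁ - δ) ^ 3 := by
  rw [Point.add_some hxy, Point.neg_some]
  simp only [millerFn, addY, negY_negY, negAddY]
  set ℓ := W.slope x₁ x₂ y₁ y₂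
  set m := W.slope γ γ δ δ
  have hy₂ := Y_eq_slope_mul_add h₁.1 h₂.1 hxy
  have hcubic := mul_mul_eq_pow_three_of_cubic_eq (α := ℓ - m) (c := ℓ * (γ - x₁) + y₁ - δ) (γ := γ)
    (x₁ := x₁) (x₂ := x₂) (x₃ := W.addX x₁ x₂ ℓ) fun x hx => by
      have hline := eval_addPolynomial_eq_evalEval (W := W) x₁ y₁ ℓ x
      have htangent := eval_addPolynomial_eq_evalEval (W := W) γ δ m x
      rw [addPolynomial_slope h₁.1 h₂.1 hxy] at hline
      rw [addPolynomial_slope_of_three_nsmul_eq_zero hT] at htangent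
      -- at `x` the chord and the tangent meet, so both cubics are `W.polynomial` at that point
      rw [show ℓ * (x - x₁) + y₁ = m * (x - γ) + δ by linear_combination hx, ← htangent] at hline
      simp only [eval_neg, eval_pow, eval_mul, eval_sub, eval_X, eval_C] at hline
      linear_combination -hline
  linear_combination hcubic + (y₁ - (m * (x₁ - γ) + δ)) *
    (ℓ * (W.addX x₁ x₂ ℓ - x₁) + y₁ - (m * (W.addX x₁ x₂ ℓ - γ) + δ)) * hy₂

lemma isCube_millerFn_mul_millerFn_neg (hT : 3 • Point.some γ δ hW = 0) (P : W.Point) :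
    IsCube (W.millerFn γ δ P * W.millerFn γ δ (-P)) := by
  rcases P with _ | ⟨x, y, h⟩
  · exact ⟨1, by rw [← Point.zero_def, Point.neg_zero, millerFn_zero]; ring⟩
  · exact ⟨γ - x, (millerFn_some_mul_millerFn_neg_some hT h).symm⟩

lemma isCube_millerFn_mul_millerFn_mul_millerFn_neg_add (hT : 3 • Point.some γ δ hW = 0)
    (P Q : W.Point) :
    IsCube (W.millerFn γ δ P * W.millerFn γ δ Q * W.millerFn γ δ (-(P + Q))) := by
  rcases P with _ | ⟨x₁, y₁, h₁⟩
  · rw [← Point.zero_def, millerFn_zero, one_mul, zero_add]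
    exact isCube_millerFn_mul_millerFn_neg hT Q
  rcases Q with _ | ⟨x₂, y₂, h₂⟩
  · rw [← Point.zero_def, millerFn_zero, mul_one, add_zero]
    exact isCube_millerFn_mul_millerFn_neg hT _
  by_cases hxy : x₁ = x₂ ∧ y₁ = W.negY x₂ y₂
  · obtain ⟨rfl, rfl⟩ := hxy
    rw [Point.add_of_Y_eq rfl rfl, Point.neg_zero, millerFn_zero, mul_one, mul_comm]
    exact isCube_millerFn_mul_millerFn_neg hT _
  · exact ⟨_, (millerFn_mul_millerFn_mul_millerFn_neg_add hT h₁ h₂ hxy).symm⟩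

lemma eq_of_millerFn_eq_zero (hT : 3 • Point.some γ δ hW = 0) {P : W.Point}
    (hP : W.millerFn γ δ P = 0) : P = Point.some γ δ hW := by
  rcases P with _ | ⟨x, y, h⟩
  · exact absurd hP one_ne_zero
  · have hx := millerFn_some_mul_millerFn_neg_some hT h
    rw [hP, zero_mul, eq_comm, pow_eq_zero_iff three_ne_zero, sub_eq_zero] at hx
    subst hx
    obtain rfl : y = δ := by
      simp only [millerFn] at hP
      linear_combination hP
    rfl

theorem isCube_millerFn_neg_three_nsmul (hT : 3 • Point.some γ δ hW = 0) (P : W.Point) :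
    IsCube (W.millerFn γ δ (-(3 • P))) := by
  set f := W.millerFn γ δ
  by_cases h2Q : 2 • 3 • P = 0
  · have hneg : -(3 • P) = (3 • P : W.Point) := neg_eq_of_add_eq_zero_right (by rwa [← two_nsmul])
    have hQ : f (3 • P) ≠ 0 := fun h => by
      rw [eq_of_millerFn_eq_zero hT h] at h2Q
      exact Point.some_ne_zero hW (by rw [← hT, succ_nsmul, h2Q, zero_add])
    have hsq := isCube_millerFn_mul_millerFn_neg hT (3 • P)
    rw [hneg] at hsq ⊢
    exact (pow_three (f (3 • P)) ▸ isCube_pow_three _).of_mul_right hsq (mul_ne_zero hQ hQ)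
  · have hP : f P ≠ 0 := fun h => h2Q (by rw [eq_of_millerFn_eq_zero hT h, hT, nsmul_zero])
    have h2P : f (P + P) ≠ 0 := fun h => h2Q (by
      rw [smul_comm, two_nsmul, eq_of_millerFn_eq_zero hT h, hT])
    have h2P' : f (-(P + P)) ≠ 0 := fun h => h2Q (by
      rw [smul_comm, two_nsmul, ← neg_neg (P + P), eq_of_millerFn_eq_zero hT h, smul_neg, hT,
        neg_zero])
    have hcube := (isCube_millerFn_mul_millerFn_mul_millerFn_neg_add hT P P).mul
      (isCube_millerFn_mul_millerFn_mul_millerFn_neg_add hT (P + P) P)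
    rw [show (3 • P : W.Point) = P + P + P by rw [succ_nsmul, two_nsmul]]
    have hprod : f (-(P + P + P)) * (f P ^ 3 * (f (P + P) * f (-(P + P)))) =
        f P * f P * f (-(P + P)) * (f (P + P) * f P * f (-(P + P + P))) := by
      ring
    exact IsCube.of_mul_right (hprod ▸ hcube)
      ((isCube_pow_three _).mul (isCube_millerFn_mul_millerFn_neg hT (P + P)))
      (mul_ne_zero (pow_ne_zero 3 hP) (mul_ne_zero h2P h2P'))

end WeierstrassCurve.Affine

open WeierstrassCurve.Affine

open Classical in
theorem stmt_8_general {k : Type*} [Field k]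
    (a b : k)
    (γ δ : k) (hW : (shortWCurve a b).Nonsingular γ δ)
    (hord : 3 • (WeierstrassCurve.Affine.Point.some _ _ hW)
        = (0 : (shortWCurve a b).Point))
    (xP yP xQ yQ : k)
    (hP : (shortWCurve a b).Nonsingular xP yP)
    (hQ : (shortWCurve a b).Nonsingular xQ yQ)
    (hPQ : 3 • (WeierstrassCurve.Affine.Point.some _ _ hP)
        = WeierstrassCurve.Affine.Point.some _ _ hQ) :
    ∃ c : k, c ^ 3 = -yQ - δ - ((3 * γ ^ 2 + a) / (2 * δ)) * (xQ - γ) := by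
  have hslope : (shortWCurve a b).slope γ γ δ δ = (3 * γ ^ 2 + a) / (2 * δ) := by
    rw [slope_of_Y_ne rfl (Y_ne_negY_of_three_nsmul_eq_zero hord)]
    simp only [shortWCurve, negY, mul_zero, zero_mul, add_zero, sub_zero, sub_neg_eq_add, two_mul]
  obtain ⟨c, hc⟩ := isCube_millerFn_neg_three_nsmul hord (Point.some _ _ hP)
  refine ⟨c, ?_⟩
  rw [hc, hPQ, Point.neg_some, millerFn_some, hslope]
  simp only [shortWCurve, negY, zero_mul, sub_zero]
  ring

open Classical in
theorem stmt_8 {k : Type*} [Field k] (h2 : (2 : k) ≠ 0) (h3 : (3 : k) ≠ 0)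
    (a b : k) (hΔ : -16 * (4 * a ^ 3 + 27 * b ^ 2) ≠ 0)
    (γ δ : k) (hW : (shortWCurve a b).Nonsingular γ δ)
    (hord : 3 • (WeierstrassCurve.Affine.Point.some _ _ hW)
        = (0 : (shortWCurve a b).Point))
    (xP yP xQ yQ : k)
    (hP : (shortWCurve a b).Nonsingular xP yP)
    (hQ : (shortWCurve a b).Nonsingular xQ yQ)
    (hPQ : 3 • (WeierstrassCurve.Affine.Point.some _ _ hP)
        = WeierstrassCurve.Affine.Point.some _ _ hQ) :
    ∃ c : k, c ^ 3 = -yQ - δ - ((3 * γ ^ 2 + a) / (2 * δ)) * (xQ - γ) :=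
  stmt_8_general a b γ δ hW hord xP yP xQ yQ hP hQ hPQ
end

section
/- Let P = (x_P, y_P) and Q = (x_Q, y_Q) be affine points of E(k) with 3•P = Q. Then (3x_P⁴ + 6a·x_P² + 12b·x_P − a²)·(x_Q − x_P)² + 4y_P²·(3x_P² + a)·(x_Q − x_P) + 8y_P³·(y_P + y_Q) = 0. (Equivalently, the second-order Taylor expansion of the y-coordinate at P, evaluated at x_Q, equals −y_Q; this is the vanishing of the determinant of the linear system defining the function g_P with divisor 3(P) + (−Q) − 4(O) for ℓ = 3.) -/
open WeierstrassCurve.Affine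

namespace shortWCurve

variable {k : Type*} [Field k] {a b : k}

lemma equation_iff_sq {x y : k} : (shortWCurve a b).Equation x y ↔ y ^ 2 = x ^ 3 + a * x + b := by
  rw [equation_iff]
  simp only [shortWCurve]
  ring_nf

lemma negY_eq (x y : k) : (shortWCurve a b).negY x y = -y := by
  simp only [negY, shortWCurve]
  ring

lemma addX_eq (x₁ x₂ ℓ : k) : (shortWCurve a b).addX x₁ x₂ ℓ = ℓ ^ 2 - x₁ - x₂ := by
  simp only [addX, shortWCurve]
  ring

lemma addY_eq (x₁ x₂ y₁ ℓ : k) :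
    (shortWCurve a b).addY x₁ x₂ y₁ ℓ = -(ℓ * ((shortWCurve a b).addX x₁ x₂ ℓ - x₁) + y₁) := by
  rw [addY, negAddY, negY_eq]

variable [DecidableEq k]

lemma two_mul_mul_slope_self {x y : k} (hy : y ≠ (shortWCurve a b).negY x y) :
    2 * y * (shortWCurve a b).slope x x y y = 3 * x ^ 2 + a := by
  have h2y : 2 * y ≠ 0 := fun h ↦ hy (by rw [negY_eq]; linear_combination h)
  rw [slope_of_Y_ne rfl hy, negY_eq, show y - -y = 2 * y by ring, mul_div_cancel₀ _ h2y]
  simp [shortWCurve]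

lemma sub_mul_slope {x₁ x₂ y₁ y₂ : k} (hx : x₁ ≠ x₂) :
    (x₁ - x₂) * (shortWCurve a b).slope x₁ x₂ y₁ y₂ = y₁ - y₂ := by
  rw [slope_of_X_ne hx, mul_div_cancel₀ _ (sub_ne_zero.mpr hx)]

end shortWCurve

lemma WeierstrassCurve.Affine.Point.X_ne_of_add_self_eq_some {F : Type*} [Field F] [DecidableEq F]
    {W : WeierstrassCurve.Affine F} {x y x₂ y₂ : F} {h : W.Nonsingular x y}
    {h₂ : W.Nonsingular x₂ y₂} (hdbl : some _ _ h + some _ _ h = some _ _ h₂)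
    (htpl : some _ _ h + some _ _ h + some _ _ h ≠ 0) : x₂ ≠ x := by
  intro hx
  rcases Point.X_eq_iff.mp hx with hself | hneg
  · rw [hself] at hdbl
    exact Point.some_ne_zero h (add_eq_left.mp hdbl)
  · rw [hdbl, hneg, neg_add_cancel] at htpl
    exact htpl rfl

theorem triple_coords_relation {R : Type*} [CommRing R] {a b x y ℓ x₂ y₂ m x₃ y₃ : R}
    (hE : y ^ 2 = x ^ 3 + a * x + b) (hℓ : 2 * y * ℓ = 3 * x ^ 2 + a)
    (hx₂ : x₂ = ℓ ^ 2 - x - x) (hy₂ : y₂ = -(ℓ * (x₂ - x) + y))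
    (hm : (x₂ - x) * m = y₂ - y) (hx₃ : x₃ = m ^ 2 - x₂ - x) (hy₃ : y₃ = -(m * (x₃ - x₂) + y₂)) :
    (3 * x ^ 4 + 6 * a * x ^ 2 + 12 * b * x - a ^ 2) * (x₃ - x) ^ 2
      + 4 * y ^ 2 * (3 * x ^ 2 + a) * (x₃ - x) + 8 * y ^ 3 * (y + y₃) = 0 := by
  have hψ : 3 * x ^ 4 + 6 * a * x ^ 2 + 12 * b * x - a ^ 2 = -4 * y ^ 2 * (x₂ - x) := by
    linear_combination (2 * y * ℓ + 3 * x ^ 2 + a) * hℓ - 12 * x * hE + 4 * y ^ 2 * hx₂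
  have hchord : (m + ℓ) * (x₂ - x) = -2 * y := by
    linear_combination hm + hy₂
  have hx₃x : x₃ - x = (m - ℓ) * (m + ℓ) := by
    linear_combination hx₃ - hx₂
  have hy₃y : y + y₃ = -m * (x₃ - x) := by
    linear_combination hy₃ + hm
  rw [hψ, ← hℓ, hy₃y, hx₃x]
  linear_combination (-4 * y ^ 2 * (m - ℓ) * ((m - ℓ) * (m + ℓ))) * hchord

open Classical in
theorem stmt_13_general {k : Type*} [Field k]
    (a b : k)
    (xP yP xQ yQ : k)
    (hP : (shortWCurve a b).Nonsingular xP yP)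
    (hQ : (shortWCurve a b).Nonsingular xQ yQ)
    (hPQ : 3 • (WeierstrassCurve.Affine.Point.some xP yP hP)
        = WeierstrassCurve.Affine.Point.some xQ yQ hQ) :
    (3 * xP ^ 4 + 6 * a * xP ^ 2 + 12 * b * xP - a ^ 2) * (xQ - xP) ^ 2
      + 4 * yP ^ 2 * (3 * xP ^ 2 + a) * (xQ - xP)
      + 8 * yP ^ 3 * (yP + yQ) = 0 := by
  have hE := shortWCurve.equation_iff_sq.mp hP.1
  have h3 : Point.some _ _ hP + Point.some _ _ hP + Point.some _ _ hP = Point.some _ _ hQ := by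
    rw [← hPQ]
    abel
  by_cases hy : yP = (shortWCurve a b).negY xP yP
  · rw [Point.add_self_of_Y_eq hy, zero_add, Point.some.injEq] at h3
    obtain ⟨rfl, rfl⟩ := h3
    rw [shortWCurve.negY_eq] at hy
    linear_combination 8 * yP ^ 3 * hy
  · have hdbl := Point.add_self_of_Y_ne (h₁ := hP) hy
    have hx := Point.X_ne_of_add_self_eq_some hdbl (h3 ▸ Point.some_ne_zero hQ)
    rw [hdbl, Point.add_of_X_ne hx, Point.some.injEq] at h3
    obtain ⟨rfl, rfl⟩ := h3
    exact triple_coords_relation hE (shortWCurve.two_mul_mul_slope_self hy)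
      (shortWCurve.addX_eq ..) (shortWCurve.addY_eq ..) (shortWCurve.sub_mul_slope hx)
      (shortWCurve.addX_eq ..) (shortWCurve.addY_eq ..)

open Classical in
theorem stmt_13 {k : Type*} [Field k] (h2 : (2 : k) ≠ 0) (h3 : (3 : k) ≠ 0)
    (a b : k) (hΔ : -16 * (4 * a ^ 3 + 27 * b ^ 2) ≠ 0)
    (xP yP xQ yQ : k)
    (hP : (shortWCurve a b).Nonsingular xP yP)
    (hQ : (shortWCurve a b).Nonsingular xQ yQ)
    (hPQ : 3 • (WeierstrassCurve.Affine.Point.some xP yP hP)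
        = WeierstrassCurve.Affine.Point.some xQ yQ hQ) :
    (3 * xP ^ 4 + 6 * a * xP ^ 2 + 12 * b * xP - a ^ 2) * (xQ - xP) ^ 2
      + 4 * yP ^ 2 * (3 * xP ^ 2 + a) * (xQ - xP)
      + 8 * yP ^ 3 * (yP + yQ) = 0 :=
  stmt_13_general a b xP yP xQ yQ hP hQ hPQ
end
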